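/- arXiv:1411.5192 — 2 statements merged into one kernel-verified Lean document; each statement's English description precedes it below -/
import Mathlib

section
/- Let 1 < q < p be real numbers and let ρ₂ > 0 satisfy ρ₂ ≤ g(q,p;t) for all t > 0. Then for every open set Ω ⊆ ℝ^N, every pair of functions u, ψ : ℝ^N → ℝ differentiable at every point of Ω with u > 0 and ψ ≥ 0 on Ω, and every x ∈ Ω, one has |∇u(x)|^(q-2) · ⟨∇u(x), ∇(ψ^q/(u^(p-1) + u^(q-1)))(x)⟩ ≤ |∇ψ(x)|^q / ρ₂^(q-1). -/
open scoped RealInnerProductSpace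

/-- `g p q t = ((p-1)·t^(p-2) + (q-1)·t^(q-2)) / ((p-1)·(t^(p-1)+t^(q-1))^((p-2)/(p-1)))`. -/
noncomputable def g (p q t : ℝ) : ℝ :=
  ((p - 1) * t ^ (p - 2) + (q - 1) * t ^ (q - 2)) /
    ((p - 1) * (t ^ (p - 1) + t ^ (q - 1)) ^ ((p - 2) / (p - 1)))

/-!
With `Φ(t) = t^(p-1) + t^(q-1)` one has
`∇(ψ^q / Φ(u)) = q ψ^(q-1) ∇ψ / Φ(u) - ψ^q Φ'(u) ∇u / Φ(u)²`. After Cauchy–Schwarz the left-hand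
side is at most `q X^(q-1) |∇ψ| - ψ^q Φ'(u) |∇u|^q / Φ(u)²` with `X = ψ |∇u| / Φ(u)^(1/(q-1))`.
The hypothesis `ρ₂ ≤ g(q,p;u)` reads `(q-1) ρ₂ Φ(u)^((q-2)/(q-1)) ≤ Φ'(u)`, so the subtracted term
is at least `(q-1) ρ₂ X^q`, and Young's inequality `q X^(q-1) Y ≤ (q-1) ρ X^q + Y^q / ρ^(q-1)`
finishes the proof.
-/

namespace Real

theorem mul_rpow_sub_one_mul_le {q ρ X Y : ℝ} (hq : 1 < q) (hρ : 0 < ρ) (hX : 0 ≤ X)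
    (hY : 0 ≤ Y) : q * X ^ (q - 1) * Y ≤ (q - 1) * ρ * X ^ q + Y ^ q / ρ ^ (q - 1) := by
  have hq0 : 0 < q := by linarith
  have hamgm := geom_mean_le_arith_mean2_weighted (w₁ := (q - 1) / q) (w₂ := 1 / q)
    (p₁ := ρ * X ^ q) (p₂ := Y ^ q / ρ ^ (q - 1)) (div_nonneg (by linarith) hq0.le)
    (by positivity) (by positivity) (by positivity) (by field_simp; ring)
  have hgeom :
      (ρ * X ^ q) ^ ((q - 1) / q) * (Y ^ q / ρ ^ (q - 1)) ^ (1 / q) = X ^ (q - 1) * Y := by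
    rw [mul_rpow hρ.le (by positivity), div_rpow (by positivity) (by positivity),
      ← rpow_mul hX, ← rpow_mul hY, ← rpow_mul hρ.le, mul_one_div_cancel hq0.ne', rpow_one]
    field_simp
  rw [hgeom] at hamgm
  calc q * X ^ (q - 1) * Y = q * (X ^ (q - 1) * Y) := by ring
    _ ≤ q * ((q - 1) / q * (ρ * X ^ q) + 1 / q * (Y ^ q / ρ ^ (q - 1))) := by gcongr
    _ = (q - 1) * ρ * X ^ q + Y ^ q / ρ ^ (q - 1) := by field_simp

theorem mul_rpow_div_sub_div_sq_le {q ρ A B Z W : ℝ} (hq : 1 < q) (hρ : 0 < ρ) (hA : 0 < A)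
    (hZ : 0 ≤ Z) (hW : 0 ≤ W) (hB : (q - 1) * ρ * A ^ ((q - 2) / (q - 1)) ≤ B) :
    q * Z ^ (q - 1) / A * W - B * Z ^ q / A ^ 2 ≤ W ^ q / ρ ^ (q - 1) := by
  have hq1 : q - 1 ≠ 0 := by linarith
  -- `A = c^(q-1)`, and `X = Z / c` is the variable in which Young's inequality applies.
  set c := A ^ (q - 1)⁻¹
  have hc : 0 < c := by positivity
  have hcA (r : ℝ) : A ^ (r / (q - 1)) = c ^ r := by
    rw [← rpow_mul hA.le]; field_simp
  have hX1 : q * Z ^ (q - 1) / A * W = q * (Z / c) ^ (q - 1) * W := by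
    rw [div_rpow hZ hc.le, ← hcA, div_self hq1, rpow_one]; ring
  have hX2 : (q - 1) * ρ * (Z / c) ^ q ≤ B * Z ^ q / A ^ 2 := by
    have hA2 : A ^ 2 = c ^ (q - 2) * c ^ q := by
      rw [← rpow_add hc, ← hcA, ← rpow_natCast]; congr 1; field_simp; ring
    calc (q - 1) * ρ * (Z / c) ^ q
        = (q - 1) * ρ * A ^ ((q - 2) / (q - 1)) * Z ^ q / A ^ 2 := by
          rw [div_rpow hZ hc.le, hA2, hcA]; field_simp
      _ ≤ B * Z ^ q / A ^ 2 := by gcongr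
  linarith [mul_rpow_sub_one_mul_le hq hρ (div_nonneg hZ hc.le) hW]

end Real

section InnerProductSpace

variable {E : Type*} [NormedAddCommGroup E] [InnerProductSpace ℝ E]

theorem norm_rpow_sub_two_mul_inner_le (q : ℝ) (v w : E) :
    ‖v‖ ^ (q - 2) * ⟪v, w⟫ ≤ ‖v‖ ^ (q - 1) * ‖w‖ := by
  rcases eq_or_ne v 0 with rfl | hv
  · simp only [inner_zero_left, mul_zero, norm_zero]
    positivity
  · calc ‖v‖ ^ (q - 2) * ⟪v, w⟫ ≤ ‖v‖ ^ (q - 2) * (‖v‖ * ‖w‖) := by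
          gcongr; exact real_inner_le_norm v w
      _ = ‖v‖ ^ (q - 1) * ‖w‖ := by
          rw [← mul_assoc, ← Real.rpow_add_one (norm_ne_zero_iff.mpr hv)]; ring_nf

theorem norm_rpow_mul_sub_le {q ρ a A B : ℝ} (hq : 1 < q) (hρ : 0 < ρ) (hA : 0 < A)
    (ha : 0 ≤ a) (hB : (q - 1) * ρ * A ^ ((q - 2) / (q - 1)) ≤ B) (v w : E) :
    ‖v‖ ^ (q - 2) * (q * a ^ (q - 1) / A * ⟪v, w⟫ - a ^ q * B / A ^ 2 * ‖v‖ ^ 2) ≤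
      ‖w‖ ^ q / ρ ^ (q - 1) := by
  have hsq : ‖v‖ ^ (q - 2) * ‖v‖ ^ 2 = ‖v‖ ^ q := by
    rw [← Real.rpow_two, ← Real.rpow_add' (norm_nonneg v) (by linarith)]; ring_nf
  calc ‖v‖ ^ (q - 2) * (q * a ^ (q - 1) / A * ⟪v, w⟫ - a ^ q * B / A ^ 2 * ‖v‖ ^ 2)
      = q * a ^ (q - 1) / A * (‖v‖ ^ (q - 2) * ⟪v, w⟫) - a ^ q * B / A ^ 2 * ‖v‖ ^ q := by
        rw [← hsq]; ring
    _ ≤ q * a ^ (q - 1) / A * (‖v‖ ^ (q - 1) * ‖w‖) - a ^ q * B / A ^ 2 * ‖v‖ ^ q := by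
        gcongr q * a ^ (q - 1) / A * ?_ - _
        exact norm_rpow_sub_two_mul_inner_le q v w
    _ = q * (a * ‖v‖) ^ (q - 1) / A * ‖w‖ - B * (a * ‖v‖) ^ q / A ^ 2 := by
        rw [Real.mul_rpow ha (norm_nonneg v), Real.mul_rpow ha (norm_nonneg v)]; ring
    _ ≤ ‖w‖ ^ q / ρ ^ (q - 1) :=
        Real.mul_rpow_div_sub_div_sq_le hq hρ hA (by positivity) (norm_nonneg w) hB

variable [CompleteSpace E] {f k : E → ℝ} {f' k' x : E}

theorem HasGradientAt.mul (hf : HasGradientAt f f' x) (hk : HasGradientAt k k' x) :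
    HasGradientAt (fun y => f y * k y) (f x • k' + k x • f') x := by
  rw [hasGradientAt_iff_hasFDerivAt, map_add, map_smul, map_smul]
  exact hf.hasFDerivAt.mul hk.hasFDerivAt

theorem HasDerivAt.comp_hasGradientAt {h : ℝ → ℝ} {h' : ℝ} (hh : HasDerivAt h h' (f x))
    (hf : HasGradientAt f f' x) : HasGradientAt (h ∘ f) (h' • f') x := by
  rw [hasGradientAt_iff_hasFDerivAt, map_smul]
  exact hh.comp_hasFDerivAt x hf.hasFDerivAt

theorem hasGradientAt_rpow_div_comp {u ψ : E → ℝ} {Φ : ℝ → ℝ} {Φ' q : ℝ}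
    (hu : DifferentiableAt ℝ u x) (hψ : DifferentiableAt ℝ ψ x)
    (hΦ : HasDerivAt Φ Φ' (u x)) (hΦx : Φ (u x) ≠ 0) (hq : 1 ≤ q) :
    HasGradientAt (fun y => ψ y ^ q / Φ (u y))
      ((q * ψ x ^ (q - 1) / Φ (u x)) • gradient ψ x -
        (ψ x ^ q * Φ' / Φ (u x) ^ 2) • gradient u x) x := by
  have hnum := (Real.hasDerivAt_rpow_const (x := ψ x) (Or.inr hq)).comp_hasGradientAt
    hψ.hasGradientAt
  have hden := (hΦ.inv hΦx).comp_hasGradientAt hu.hasGradientAt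
  convert hnum.mul hden using 1
  · ext y; simp [div_eq_mul_inv]
  · simp only [smul_smul, sub_eq_add_neg, ← neg_smul]
    rw [add_comm]
    congr 2 <;> simp only [Function.comp_apply, Pi.inv_apply] <;> ring

theorem inner_gradient_rpow_div_comp {u ψ : E → ℝ} {Φ : ℝ → ℝ} {Φ' q : ℝ}
    (hu : DifferentiableAt ℝ u x) (hψ : DifferentiableAt ℝ ψ x)
    (hΦ : HasDerivAt Φ Φ' (u x)) (hΦx : Φ (u x) ≠ 0) (hq : 1 ≤ q) :
    ⟪gradient u x, gradient (fun y => ψ y ^ q / Φ (u y)) x⟫ =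
      q * ψ x ^ (q - 1) / Φ (u x) * ⟪gradient u x, gradient ψ x⟫ -
        ψ x ^ q * Φ' / Φ (u x) ^ 2 * ‖gradient u x‖ ^ 2 := by
  rw [(hasGradientAt_rpow_div_comp hu hψ hΦ hΦx hq).gradient, inner_sub_right, inner_smul_right,
    inner_smul_right, real_inner_self_eq_norm_sq]

end InnerProductSpace

theorem hasDerivAt_rpow_add_rpow {a b t : ℝ} (ht : 0 < t) :
    HasDerivAt (fun s => s ^ a + s ^ b) (a * t ^ (a - 1) + b * t ^ (b - 1)) t :=
  (Real.hasDerivAt_rpow_const (Or.inl ht.ne')).add (Real.hasDerivAt_rpow_const (Or.inl ht.ne'))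

theorem mul_rpow_le_of_le_g {p q ρ t : ℝ} (hq : 1 < q) (ht : 0 < t) (hρ : ρ ≤ g q p t) :
    (q - 1) * ρ * (t ^ (p - 1) + t ^ (q - 1)) ^ ((q - 2) / (q - 1)) ≤
      (p - 1) * t ^ (p - 2) + (q - 1) * t ^ (q - 2) := by
  have hq1 : 0 < q - 1 := by linarith
  rw [g, le_div_iff₀ (by positivity), add_comm (t ^ (q - 1))] at hρ
  linarith

theorem stmt4_general (p q : ℝ) (hq : 1 < q) (ρ₂ : ℝ) (hρ₂ : 0 < ρ₂)
    (hρ₂g : ∀ t : ℝ, 0 < t → ρ₂ ≤ g q p t) :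
    ∀ (N : ℕ), 0 < N →
      ∀ (Ω : Set (EuclideanSpace ℝ (Fin N))), IsOpen Ω →
        ∀ (u ψ : EuclideanSpace ℝ (Fin N) → ℝ),
          (∀ x ∈ Ω, DifferentiableAt ℝ u x) →
          (∀ x ∈ Ω, DifferentiableAt ℝ ψ x) →
          (∀ x ∈ Ω, 0 < u x) →
          (∀ x ∈ Ω, 0 ≤ ψ x) →
          ∀ x ∈ Ω,
            ‖gradient u x‖ ^ (q - 2) *
                ⟪gradient u x,
                  gradient (fun y => ψ y ^ q / (u y ^ (p - 1) + u y ^ (q - 1))) x⟫ ≤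
              ‖gradient ψ x‖ ^ q / ρ₂ ^ (q - 1) := by
  intro N _ Ω _ u ψ hu hψ hu_pos hψ_nonneg x hx
  have hux := hu_pos x hx
  have hΦ : u x ^ (p - 1) + u x ^ (q - 1) ≠ 0 := by positivity
  rw [inner_gradient_rpow_div_comp (hu x hx) (hψ x hx) (hasDerivAt_rpow_add_rpow hux) hΦ hq.le,
    sub_sub, sub_sub, one_add_one_eq_two]
  exact norm_rpow_mul_sub_le hq hρ₂ (by positivity) (hψ_nonneg x hx)
    (mul_rpow_le_of_le_g hq hux (hρ₂g _ hux)) (gradient u x) (gradient ψ x)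

/-- For `1 < q < p` and `0 < ρ₂ ≤ g q p t` for all `t > 0`:
`|∇u|^(q-2)·⟨∇u, ∇(ψ^q/(u^(p-1)+u^(q-1)))⟩ ≤ |∇ψ|^q / ρ₂^(q-1)`
for differentiable `u > 0`, `ψ ≥ 0` on an open set `Ω`. -/
theorem stmt4 (p q : ℝ) (hq : 1 < q) (hqp : q < p) (ρ₂ : ℝ) (hρ₂ : 0 < ρ₂)
    (hρ₂g : ∀ t : ℝ, 0 < t → ρ₂ ≤ g q p t) :
    ∀ (N : ℕ), 0 < N →
      ∀ (Ω : Set (EuclideanSpace ℝ (Fin N))), IsOpen Ω →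
        ∀ (u ψ : EuclideanSpace ℝ (Fin N) → ℝ),
          (∀ x ∈ Ω, DifferentiableAt ℝ u x) →
          (∀ x ∈ Ω, DifferentiableAt ℝ ψ x) →
          (∀ x ∈ Ω, 0 < u x) →
          (∀ x ∈ Ω, 0 ≤ ψ x) →
          ∀ x ∈ Ω,
            ‖gradient u x‖ ^ (q - 2) *
                ⟪gradient u x,
                  gradient (fun y => ψ y ^ q / (u y ^ (p - 1) + u y ^ (q - 1))) x⟫ ≤
              ‖gradient ψ x‖ ^ q / ρ₂ ^ (q - 1) :=
  stmt4_general p q hq ρ₂ hρ₂ hρ₂g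
end

section
/- Let q > 1 be a real number. Then for every open set Ω ⊆ ℝ^N, every pair of functions u, φ : ℝ^N → ℝ differentiable at every point of Ω with u > 0 and φ ≥ 0 on Ω, and every x ∈ Ω, one has the Picone-type inequality |∇u(x)|^(q-2) · ⟨∇u(x), ∇(φ^q/u^(q-1))(x)⟩ ≤ |∇φ(x)|^q. -/
/-!
Writing `t = φ / u`, the chain rule gives `∇(φ^q / u^(q-1)) = q t^(q-1) ∇φ - (q-1) t^q ∇u`.
After Cauchy–Schwarz, the left-hand side is at most `q s^(q-1) |∇φ| - (q-1) s^q` with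
`s = t |∇u|`, and this is at most `|∇φ|^q` by Young's inequality with exponents `q / (q-1)`
and `q`.
-/

open scoped RealInnerProductSpace

theorem Real.mul_rpow_sub_one_mul_le_s6 {q s B : ℝ} (hq : 1 < q) (hs : 0 ≤ s) (hB : 0 ≤ B) :
    q * (s ^ (q - 1) * B) ≤ (q - 1) * s ^ q + B ^ q := by
  have hq₀ : 0 < q := by linarith
  have hq₁ : q - 1 ≠ 0 := sub_ne_zero.mpr hq.ne'
  have hyoung := Real.young_inequality_of_nonneg (Real.rpow_nonneg hs (q - 1)) hB
    (Real.HolderConjugate.conjExponent hq).symm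
  have hpow : (s ^ (q - 1)) ^ Real.conjExponent q = s ^ q := by
    rw [← Real.rpow_mul hs, Real.conjExponent, mul_div_cancel₀ q hq₁]
  rw [hpow, Real.conjExponent, div_div_eq_mul_div] at hyoung
  calc q * (s ^ (q - 1) * B) ≤ q * (s ^ q * (q - 1) / q + B ^ q / q) := by gcongr
    _ = (q - 1) * s ^ q + B ^ q := by field_simp

theorem norm_rpow_mul_inner_smul_add_smul_le {E : Type*} [NormedAddCommGroup E]
    [InnerProductSpace ℝ E] {q t : ℝ} (hq : 1 < q) (ht : 0 ≤ t) (a b : E) :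
    ‖a‖ ^ (q - 2) * ⟪a, (q * t ^ (q - 1)) • b + ((1 - q) * t ^ q) • a⟫ ≤ ‖b‖ ^ q := by
  have hna := norm_nonneg a
  have hpow₁ : ‖a‖ ^ (q - 2) * ‖a‖ = ‖a‖ ^ (q - 1) := by
    rw [← Real.rpow_add_one' hna (by linarith)]; ring_nf
  have hpow₂ : ‖a‖ ^ (q - 2) * ‖a‖ ^ 2 = ‖a‖ ^ q := by
    rw [← Real.rpow_add_natCast' hna (by push_cast; linarith)]; push_cast; ring_nf
  have hcs : ‖a‖ ^ (q - 2) * ⟪a, b⟫ ≤ ‖a‖ ^ (q - 1) * ‖b‖ := by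
    rw [← hpow₁, mul_assoc]
    exact mul_le_mul_of_nonneg_left (real_inner_le_norm a b) (by positivity)
  set s := t * ‖a‖
  calc ‖a‖ ^ (q - 2) * ⟪a, (q * t ^ (q - 1)) • b + ((1 - q) * t ^ q) • a⟫
      = q * t ^ (q - 1) * (‖a‖ ^ (q - 2) * ⟪a, b⟫) + (1 - q) * t ^ q * ‖a‖ ^ q := by
        rw [inner_add_right, real_inner_smul_right, real_inner_smul_right,
          real_inner_self_eq_norm_sq, ← hpow₂]
        ring
    _ ≤ q * t ^ (q - 1) * (‖a‖ ^ (q - 1) * ‖b‖) + (1 - q) * t ^ q * ‖a‖ ^ q := by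
        gcongr
    _ = q * (s ^ (q - 1) * ‖b‖) - (q - 1) * s ^ q := by
        rw [Real.mul_rpow ht hna, Real.mul_rpow ht hna]; ring
    _ ≤ ‖b‖ ^ q := by
        linarith [Real.mul_rpow_sub_one_mul_le_s6 hq (by positivity : 0 ≤ s) (norm_nonneg b)]

theorem HasGradientAt.rpow_div_rpow_sub_one {F : Type*} [NormedAddCommGroup F]
    [InnerProductSpace ℝ F] [CompleteSpace F] {u φ : F → ℝ} {a b x : F} {q : ℝ}
    (hu : HasGradientAt u a x) (hφ : HasGradientAt φ b x) (hux : 0 < u x) (hφx : 0 ≤ φ x)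
    (hq : 1 ≤ q) :
    HasGradientAt (fun y => φ y ^ q / u y ^ (q - 1))
      ((q * (φ x / u x) ^ (q - 1)) • b + ((1 - q) * (φ x / u x) ^ q) • a) x := by
  have hprod : HasFDerivAt (fun y => φ y ^ q * u y ^ (1 - q))
      (φ x ^ q • ((1 - q) * u x ^ (1 - q - 1)) • InnerProductSpace.toDual ℝ F a +
        u x ^ (1 - q) • (q * φ x ^ (q - 1)) • InnerProductSpace.toDual ℝ F b) x :=
    (hφ.hasFDerivAt.rpow_const (Or.inr hq)).mul (hu.hasFDerivAt.rpow_const (Or.inl hux.ne'))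
  -- `u ^ (1 - q) = (u ^ (q - 1))⁻¹` needs `0 ≤ u`, so the quotient is rewritten only near `x`.
  have hquot :
      (fun y => φ y ^ q / u y ^ (q - 1)) =ᶠ[nhds x] fun y => φ y ^ q * u y ^ (1 - q) := by
    filter_upwards [hu.differentiableAt.continuousAt.eventually (eventually_gt_nhds hux)]
      with y hy
    rw [div_eq_mul_inv, ← Real.rpow_neg hy.le, neg_sub]
  have hcoeff₁ : φ x ^ q * ((1 - q) * u x ^ (1 - q - 1)) = (1 - q) * (φ x / u x) ^ q := by
    rw [Real.div_rpow hφx hux.le, show 1 - q - 1 = -q by ring, Real.rpow_neg hux.le]; ring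
  have hcoeff₂ : u x ^ (1 - q) * (q * φ x ^ (q - 1)) = q * (φ x / u x) ^ (q - 1) := by
    rw [Real.div_rpow hφx hux.le, ← neg_sub, Real.rpow_neg hux.le]; ring
  rw [hasGradientAt_iff_hasFDerivAt]
  refine (hprod.congr_of_eventuallyEq hquot).congr_fderiv ?_
  rw [smul_smul, smul_smul, hcoeff₁, hcoeff₂, map_add, map_smul, map_smul, add_comm]

/-- Picone inequality: for `q > 1`, differentiable `u > 0`, `φ ≥ 0` on an open set
`Ω ⊆ ℝ^N`, and `x ∈ Ω`: `|∇u|^(q-2)·⟨∇u, ∇(φ^q/u^(q-1))⟩ ≤ |∇φ|^q`. -/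
theorem stmt6 (q : ℝ) (hq : 1 < q) :
    ∀ (N : ℕ), 0 < N →
      ∀ (Ω : Set (EuclideanSpace ℝ (Fin N))), IsOpen Ω →
        ∀ (u φ : EuclideanSpace ℝ (Fin N) → ℝ),
          (∀ x ∈ Ω, DifferentiableAt ℝ u x) →
          (∀ x ∈ Ω, DifferentiableAt ℝ φ x) →
          (∀ x ∈ Ω, 0 < u x) →
          (∀ x ∈ Ω, 0 ≤ φ x) →
          ∀ x ∈ Ω,
            ‖gradient u x‖ ^ (q - 2) *
                ⟪gradient u x, gradient (fun y => φ y ^ q / u y ^ (q - 1)) x⟫ ≤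
              ‖gradient φ x‖ ^ q := by
  intro N _ Ω _ u φ hu hφ hu_pos hφ_nonneg x hx
  rw [((hu x hx).hasGradientAt.rpow_div_rpow_sub_one (hφ x hx).hasGradientAt (hu_pos x hx)
    (hφ_nonneg x hx) hq.le).gradient]
  exact norm_rpow_mul_inner_smul_add_smul_le hq
    (div_nonneg (hφ_nonneg x hx) (hu_pos x hx).le) _ _
end
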